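/- arXiv:1907.10501 — 2 statements merged into one kernel-verified Lean document; each statement's English description precedes it below -/
import Mathlib

section
/- For real x ≠ y, PV ∫_{(-∞, (x+y)/2)} dz/((x-z)(z-y)) = 0, where the principal value removes a symmetric ε-neighbourhood of x (assuming x < y so only the singularity at x lies in the domain). -/
/-!
Partial fractions give the primitive `F z = (x - y)⁻¹ * log |(z - y) / (x - z)|` of
`1 / ((x - z) * (z - y))`, so the truncated integral is
`(F (x - ε) - F (-ε⁻¹)) + (F ((x + y) / 2) - F (x + ε))`. At the midpoint `|z - y| = |x - z|`,
so `F` vanishes there; as `z → -∞` the ratio tends to `-1`, so `F (-ε⁻¹) → 0`; and the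
`log ε` singularities of `F (x - ε)` and `F (x + ε)` cancel, leaving
`(x - y)⁻¹ * (log |x - ε - y| - log |x + ε - y|) → 0`.
-/

open MeasureTheory Filter Topology Set

theorem Set.Ioo_diff_Ioo_eq_union {α : Type*} [LinearOrder α] {a b c d : α} (hcb : c < b)
    (had : a < d) : Ioo a b \ Ioo c d = Ioc a c ∪ Ico d b := by
  ext z
  simp only [mem_sdiff, mem_Ioo, mem_union, mem_Ioc, mem_Ico, not_and, not_lt]
  constructor
  · rintro ⟨⟨haz, hzb⟩, hz⟩
    rcases le_or_gt z c with hzc | hcz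
    · exact Or.inl ⟨haz, hzc⟩
    · exact Or.inr ⟨hz hcz, hzb⟩
  · rintro (⟨haz, hzc⟩ | ⟨hdz, hzb⟩)
    · exact ⟨⟨haz, hzc.trans_lt hcb⟩, fun hcz => absurd hcz hzc.not_gt⟩
    · exact ⟨⟨had.trans_le hdz, hzb⟩, fun _ => hdz⟩

theorem MeasureTheory.setIntegral_Ioo_diff_Ioo {E : Type*} [NormedAddCommGroup E]
    [NormedSpace ℝ E] {f : ℝ → E} {a b c d : ℝ} (hac : a ≤ c) (hcd : c < d) (hdb : d ≤ b)
    (hf₁ : IntervalIntegrable f volume a c) (hf₂ : IntervalIntegrable f volume d b) :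
    ∫ z in Ioo a b \ Ioo c d, f z = (∫ z in a..c, f z) + ∫ z in d..b, f z := by
  have hdisj : Disjoint (Ioc a c) (Ico d b) :=
    disjoint_left.mpr fun _ hz₁ hz₂ => (hz₁.2.trans_lt hcd).not_ge hz₂.1
  rw [Ioo_diff_Ioo_eq_union (hcd.trans_le hdb) (hac.trans_lt hcd),
    setIntegral_union hdisj measurableSet_Ico hf₁.1
      ((intervalIntegrable_iff_integrableOn_Ico_of_le hdb).mp hf₂),
    intervalIntegral.integral_of_le hac, intervalIntegral.integral_of_le hdb,
    integral_Ico_eq_integral_Ioo, ← integral_Ioc_eq_integral_Ioo]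

/-- Since `Real.log` is even, this is `(x - y)⁻¹ * log |(z - y) / (x - z)|`. -/
noncomputable def kernelPrimitive (x y z : ℝ) : ℝ :=
  (x - y)⁻¹ * Real.log ((z - y) / (x - z))

section Kernel

variable {x y : ℝ}

lemma hasDerivAt_kernelPrimitive {z : ℝ} (hxy : x ≠ y) (hzx : z ≠ x) (hzy : z ≠ y) :
    HasDerivAt (kernelPrimitive x y) (1 / ((x - z) * (z - y))) z := by
  have hxz : x - z ≠ 0 := sub_ne_zero.mpr hzx.symm
  have hzy' : z - y ≠ 0 := sub_ne_zero.mpr hzy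
  have hquot := ((hasDerivAt_id' z).sub_const y).fun_div ((hasDerivAt_id' z).const_sub x) hxz
  refine ((hquot.log (div_ne_zero hzy' hxz)).const_mul (x - y)⁻¹).congr_deriv ?_
  field_simp [sub_ne_zero.mpr hxy]
  ring

lemma intervalIntegrable_kernel {a b : ℝ} (hx : x ∉ uIcc a b) (hy : y ∉ uIcc a b) :
    IntervalIntegrable (fun z => 1 / ((x - z) * (z - y))) volume a b := by
  refine ContinuousOn.intervalIntegrable (continuousOn_const.div (by fun_prop) fun z hz => ?_)
  exact mul_ne_zero (sub_ne_zero.mpr (ne_of_mem_of_not_mem hz hx).symm)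
    (sub_ne_zero.mpr (ne_of_mem_of_not_mem hz hy))

lemma integral_kernel_eq_sub {a b : ℝ} (hxy : x ≠ y) (hx : x ∉ uIcc a b) (hy : y ∉ uIcc a b) :
    ∫ z in a..b, 1 / ((x - z) * (z - y)) = kernelPrimitive x y b - kernelPrimitive x y a :=
  intervalIntegral.integral_eq_sub_of_hasDerivAt
    (fun _ hz => hasDerivAt_kernelPrimitive hxy (ne_of_mem_of_not_mem hz hx)
      (ne_of_mem_of_not_mem hz hy))
    (intervalIntegrable_kernel hx hy)

lemma kernelPrimitive_midpoint (x y : ℝ) : kernelPrimitive x y ((x + y) / 2) = 0 := by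
  have : (x + y) / 2 - y = x - (x + y) / 2 := by ring
  simp [kernelPrimitive, this]

lemma tendsto_kernelPrimitive_atBot (x y : ℝ) :
    Tendsto (kernelPrimitive x y) atBot (𝓝 0) := by
  have hdist : Tendsto (fun z : ℝ => x - z) atBot atTop :=
    tendsto_atTop_add_const_left _ x tendsto_neg_atBot_atTop
  have hquot : Tendsto (fun z => (z - y) / (x - z)) atBot (𝓝 (-1)) := by
    have := ((tendsto_inv_atTop_zero.comp hdist).const_mul (x - y)).const_add (-1)
    rw [mul_zero, add_zero] at this
    refine this.congr' ?_
    filter_upwards [eventually_lt_atBot x] with z hz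
    simp only [Function.comp_apply]
    field_simp [(sub_pos.mpr hz).ne']
    ring
  have := ((Real.continuousAt_log (by norm_num)).tendsto.comp hquot).const_mul (x - y)⁻¹
  rwa [Real.log_neg_eq_log, Real.log_one, mul_zero] at this

lemma tendsto_kernelPrimitive_sub_symm (hxy : x ≠ y) :
    Tendsto (fun ε => kernelPrimitive x y (x - ε) - kernelPrimitive x y (x + ε))
      (𝓝[>] 0) (𝓝 0) := by
  have hne : x - y ≠ 0 := sub_ne_zero.mpr hxy
  have hcont : ContinuousAt
      (fun ε => (x - y)⁻¹ * (Real.log (x - ε - y) - Real.log (x + ε - y))) 0 :=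
    continuousAt_const.mul
      (((Real.continuousAt_log (by simpa using hne)).comp (by fun_prop)).sub
        ((Real.continuousAt_log (by simpa using hne)).comp (by fun_prop)))
  have hlim := hcont.tendsto.mono_left (nhdsWithin_le_nhds (s := Ioi 0))
  simp only [add_zero, sub_zero, sub_self, mul_zero] at hlim
  have hleft : ∀ᶠ ε in 𝓝 (0 : ℝ), x - ε - y ≠ 0 :=
    ContinuousAt.eventually_ne (by fun_prop) (by simpa using hne)
  have hright : ∀ᶠ ε in 𝓝 (0 : ℝ), x + ε - y ≠ 0 :=
    ContinuousAt.eventually_ne (by fun_prop) (by simpa using hne)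
  refine hlim.congr' ?_
  filter_upwards [self_mem_nhdsWithin, nhdsWithin_le_nhds hleft, nhdsWithin_le_nhds hright]
    with ε (hε : 0 < ε) hl hr
  simp only [kernelPrimitive, sub_sub_cancel, sub_add_cancel_left]
  rw [Real.log_div hl hε.ne', Real.log_div hr (neg_ne_zero.mpr hε.ne'), Real.log_neg_eq_log]
  ring

end Kernel

/-- For `x < y`,
`PV ∫_{(-∞,(x+y)/2)} dz/((x-z)(z-y)) = 0`, where the principal value is the limit as
`ε → 0⁺` of the integral over `(-1/ε, (x+y)/2)` minus the symmetric `ε`-neighbourhood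
of `x`. -/
theorem stmt9 (x y : ℝ) (hxy : x < y) :
    Filter.Tendsto
      (fun ε : ℝ =>
        ∫ z in Set.Ioo (-ε⁻¹) ((x + y) / 2) \ Set.Ioo (x - ε) (x + ε),
          1 / ((x - z) * (z - y)))
      (nhdsWithin 0 (Set.Ioi 0)) (nhds 0) := by
  set F := kernelPrimitive x y
  have hneg_inv : Tendsto (fun ε : ℝ => -ε⁻¹) (𝓝[>] 0) atBot :=
    tendsto_neg_atTop_atBot.comp tendsto_inv_nhdsGT_zero
  have hlim : Tendsto (fun ε => (F (x - ε) - F (x + ε)) - F (-ε⁻¹)) (𝓝[>] 0) (𝓝 0) := by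
    simpa using (tendsto_kernelPrimitive_sub_symm hxy.ne).sub
      ((tendsto_kernelPrimitive_atBot x y).comp hneg_inv)
  have hfar : ∀ᶠ ε in 𝓝[>] (0 : ℝ), -ε⁻¹ < x - (y - x) / 2 :=
    hneg_inv.eventually (eventually_lt_atBot _)
  have hnear : ∀ᶠ ε in 𝓝[>] (0 : ℝ), ε < (y - x) / 2 :=
    nhdsWithin_le_nhds (eventually_lt_nhds (by linarith))
  refine hlim.congr' ?_
  filter_upwards [self_mem_nhdsWithin, hfar, hnear] with ε (hε : 0 < ε) hfar hnear
  have hxl : x ∉ uIcc (-ε⁻¹) (x - ε) := notMem_uIcc_of_gt (by linarith) (by linarith)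
  have hyl : y ∉ uIcc (-ε⁻¹) (x - ε) := notMem_uIcc_of_gt (by linarith) (by linarith)
  have hxr : x ∉ uIcc (x + ε) ((x + y) / 2) := notMem_uIcc_of_lt (by linarith) (by linarith)
  have hyr : y ∉ uIcc (x + ε) ((x + y) / 2) := notMem_uIcc_of_gt (by linarith) (by linarith)
  rw [setIntegral_Ioo_diff_Ioo (by linarith) (by linarith) (by linarith)
      (intervalIntegrable_kernel hxl hyl) (intervalIntegrable_kernel hxr hyr),
    integral_kernel_eq_sub hxy.ne hxl hyl, integral_kernel_eq_sub hxy.ne hxr hyr,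
    kernelPrimitive_midpoint]
  ring
end

section
/- For x < z < y with 2|x - z| < |z - y|, and Schwartz Q, one has the kernel difference identity 𝓡_Q(y,z) - 𝓡_Q(y,x) = (x - z) · (1/π²) PV ∫_ℝ Q(ξ)/((ξ-y)(x-ξ)(z-ξ)) dξ, where 𝓡_Q(a,b) := (1/π²) PV ∫ Q(ξ)/((a-ξ)(ξ-b)) dξ. -/
/-!
For `δ` smaller than half the distance between the poles, each two-pole truncation set is the
three-pole truncation set together with the `δ`-ball around the missing pole. On the three-pole
set the two kernels differ by `(x - z)` times the three-pole kernel (partial fractions), while the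
integral over the ball tends to `0` because the kernel is integrable near a point that is not one
of its poles.
-/

open MeasureTheory Real Filter Set Topology Metric

lemma integrableOn_div_mul_of_le_abs {q : ℝ → ℝ} (hq : Integrable q) {a b δ : ℝ} (hδ : 0 < δ)
    {s : Set ℝ} (hs : MeasurableSet s) (hab : ∀ ξ ∈ s, δ ≤ |ξ - a| ∧ δ ≤ |ξ - b|) :
    IntegrableOn (fun ξ => q ξ / ((a - ξ) * (ξ - b))) s := by
  simp_rw [div_eq_mul_inv]
  refine hq.restrict.mul_bdd (c := (δ * δ)⁻¹) (by fun_prop) ?_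
  refine (ae_restrict_iff' hs).mpr (ae_of_all _ fun ξ hξ => ?_)
  obtain ⟨ha, hb⟩ := hab ξ hξ
  rw [norm_inv, norm_mul, Real.norm_eq_abs, Real.norm_eq_abs, abs_sub_comm a]
  exact inv_anti₀ (by positivity) (mul_le_mul ha hb hδ.le (abs_nonneg _))

lemma le_abs_sub_of_mem_ball {a c δ ξ : ℝ} (ha : 2 * δ ≤ |c - a|) (hξ : ξ ∈ ball c δ) :
    δ ≤ |ξ - a| := by
  have hcξ : |c - ξ| < δ := by rw [abs_sub_comm, ← Real.dist_eq]; exact mem_ball.mp hξ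
  linarith [abs_sub_le c ξ a]

lemma setOf_le_abs_sub_eq_union_ball {a b c δ : ℝ} (ha : 2 * δ ≤ |c - a|) (hb : 2 * δ ≤ |c - b|) :
    {ξ : ℝ | δ ≤ |ξ - a| ∧ δ ≤ |ξ - b|} =
      {ξ | δ ≤ |ξ - a| ∧ δ ≤ |ξ - b| ∧ δ ≤ |ξ - c|} ∪ ball c δ := by
  ext ξ
  simp only [mem_union, mem_ofPred_eq]
  constructor
  · rintro ⟨ha', hb'⟩
    by_cases hc : δ ≤ |ξ - c|
    · exact Or.inl ⟨ha', hb', hc⟩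
    · exact Or.inr (mem_ball.mpr ((Real.dist_eq ξ c).trans_lt (not_le.mp hc)))
  · rintro (⟨ha', hb', -⟩ | hc)
    · exact ⟨ha', hb'⟩
    · exact ⟨le_abs_sub_of_mem_ball ha hc, le_abs_sub_of_mem_ball hb hc⟩

lemma div_mul_sub_div_mul_eq_mul_div {q x y z ξ : ℝ} (hx : ξ ≠ x) (hy : ξ ≠ y) (hz : ξ ≠ z) :
    q / ((y - ξ) * (ξ - z)) - q / ((y - ξ) * (ξ - x)) =
      (x - z) * (q / ((ξ - y) * (x - ξ) * (z - ξ))) := by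
  have := sub_ne_zero.mpr hx.symm
  have := sub_ne_zero.mpr hy.symm
  have := sub_ne_zero.mpr hz.symm
  have := sub_ne_zero.mpr hy
  field_simp
  ring

lemma tendsto_setIntegral_ball_nhdsGT_zero {f : ℝ → ℝ} {c r : ℝ} (hr : 0 < r)
    (hf : IntegrableOn f (ball c r)) :
    Tendsto (fun δ => ∫ ξ in ball c δ, f ξ) (𝓝[>] 0) (𝓝 0) := by
  have h2δ : Tendsto (fun δ : ℝ => ENNReal.ofReal (2 * δ)) (𝓝[>] 0) (𝓝 0) := by
    have : Tendsto (fun δ : ℝ => 2 * δ) (𝓝 0) (𝓝 0) := by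
      simpa using (tendsto_id (x := 𝓝 (0 : ℝ))).const_mul 2
    exact ENNReal.ofReal_zero ▸ ENNReal.tendsto_ofReal (this.mono_left nhdsWithin_le_nhds)
  have hvol : Tendsto (fun δ => volume.restrict (ball c r) (ball c δ)) (𝓝[>] 0) (𝓝 0) :=
    tendsto_of_tendsto_of_tendsto_of_le_of_le tendsto_const_nhds h2δ (fun _ => bot_le)
      fun δ => (Measure.restrict_apply_le _ _).trans_eq (Real.volume_ball c δ)
  refine (hf.tendsto_setIntegral_nhds_zero hvol).congr' ?_
  filter_upwards [Ioc_mem_nhdsGT hr] with δ hδ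
  rw [Measure.restrict_restrict measurableSet_ball,
    inter_eq_left.mpr (ball_subset_ball hδ.2)]

lemma tendsto_setIntegral_sub_setIntegral_add_pole {q : ℝ → ℝ} (hq : Integrable q) {a b c : ℝ}
    (hca : c ≠ a) (hcb : c ≠ b) :
    Tendsto (fun δ =>
      (∫ ξ in {ξ | δ ≤ |ξ - a| ∧ δ ≤ |ξ - b|}, q ξ / ((a - ξ) * (ξ - b))) -
        ∫ ξ in {ξ | δ ≤ |ξ - a| ∧ δ ≤ |ξ - b| ∧ δ ≤ |ξ - c|}, q ξ / ((a - ξ) * (ξ - b)))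
      (𝓝[>] 0) (𝓝 0) := by
  obtain ⟨r, hr, hra, hrb⟩ : ∃ r : ℝ, 0 < r ∧ 2 * r ≤ |c - a| ∧ 2 * r ≤ |c - b| :=
    ⟨min |c - a| |c - b| / 2,
      by have := sub_ne_zero.mpr hca; have := sub_ne_zero.mpr hcb; positivity,
      by linarith [min_le_left |c - a| |c - b|], by linarith [min_le_right |c - a| |c - b|]⟩
  have hball : IntegrableOn (fun ξ => q ξ / ((a - ξ) * (ξ - b))) (ball c r) :=
    integrableOn_div_mul_of_le_abs hq hr measurableSet_ball fun ξ hξ =>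
      ⟨le_abs_sub_of_mem_ball hra hξ, le_abs_sub_of_mem_ball hrb hξ⟩
  refine (tendsto_setIntegral_ball_nhdsGT_zero hr hball).congr' ?_
  filter_upwards [Ioc_mem_nhdsGT hr] with δ ⟨hδ, hδr⟩
  have hmeas : MeasurableSet {ξ : ℝ | δ ≤ |ξ - a| ∧ δ ≤ |ξ - b| ∧ δ ≤ |ξ - c|} := by
    measurability
  have hdisj : Disjoint {ξ : ℝ | δ ≤ |ξ - a| ∧ δ ≤ |ξ - b| ∧ δ ≤ |ξ - c|} (ball c δ) :=
    disjoint_left.mpr fun ξ hξ hξc => (mem_ball.mp hξc).not_ge (Real.dist_eq ξ c ▸ hξ.2.2)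
  rw [setOf_le_abs_sub_eq_union_ball (by linarith) (by linarith),
    setIntegral_union hdisj measurableSet_ball
      (integrableOn_div_mul_of_le_abs hq hδ hmeas fun ξ hξ => ⟨hξ.1, hξ.2.1⟩)
      (hball.mono_set (ball_subset_ball hδr)), add_sub_cancel_left]

lemma setIntegral_sub_setIntegral_eq_mul_setIntegral {q : ℝ → ℝ} (hq : Integrable q)
    {x y z δ : ℝ} (hδ : 0 < δ) :
    (∫ ξ in {ξ | δ ≤ |ξ - x| ∧ δ ≤ |ξ - y| ∧ δ ≤ |ξ - z|}, q ξ / ((y - ξ) * (ξ - z))) -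
        ∫ ξ in {ξ | δ ≤ |ξ - x| ∧ δ ≤ |ξ - y| ∧ δ ≤ |ξ - z|}, q ξ / ((y - ξ) * (ξ - x)) =
      (x - z) * ∫ ξ in {ξ | δ ≤ |ξ - x| ∧ δ ≤ |ξ - y| ∧ δ ≤ |ξ - z|},
        q ξ / ((ξ - y) * (x - ξ) * (z - ξ)) := by
  have hmeas : MeasurableSet {ξ : ℝ | δ ≤ |ξ - x| ∧ δ ≤ |ξ - y| ∧ δ ≤ |ξ - z|} := by
    measurability
  have hne {ξ a : ℝ} (h : δ ≤ |ξ - a|) : ξ ≠ a := sub_ne_zero.mp (abs_pos.mp (hδ.trans_le h))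
  rw [← integral_sub (integrableOn_div_mul_of_le_abs hq hδ hmeas fun ξ hξ => ⟨hξ.2.1, hξ.2.2⟩)
      (integrableOn_div_mul_of_le_abs hq hδ hmeas fun ξ hξ => ⟨hξ.2.1, hξ.1⟩),
    ← integral_const_mul]
  exact setIntegral_congr_fun hmeas fun ξ ⟨hx, hy, hz⟩ =>
    div_mul_sub_div_mul_eq_mul_div (hne hx) (hne hy) (hne hz)

theorem stmt16_general
    (Q : SchwartzMap ℝ ℝ)
    (RQker : ℝ → ℝ → ℝ)
    (hRQker : ∀ a b : ℝ, a ≠ b → Tendsto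
      (fun δ : ℝ => (1 / π ^ 2) *
        ∫ ξ in {ξ : ℝ | δ ≤ |ξ - a| ∧ δ ≤ |ξ - b|}, Q ξ / ((a - ξ) * (ξ - b)))
      (nhdsWithin 0 (Set.Ioi 0)) (nhds (RQker a b)))
    (x z y : ℝ) (h1 : x < z) (h2 : z < y)
    (I : ℝ)
    (hI : Tendsto
      (fun δ : ℝ =>
        ∫ ξ in {ξ : ℝ | δ ≤ |ξ - x| ∧ δ ≤ |ξ - y| ∧ δ ≤ |ξ - z|},
          Q ξ / ((ξ - y) * (x - ξ) * (z - ξ)))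
      (nhdsWithin 0 (Set.Ioi 0)) (nhds I)) :
    RQker y z - RQker y x = (x - z) * ((1 / π ^ 2) * I) := by
  have hyz : y ≠ z := h2.ne'
  have hyx : y ≠ x := (h1.trans h2).ne'
  have hxz : x ≠ z := h1.ne
  have hsets (δ : ℝ) :
      {ξ : ℝ | δ ≤ |ξ - y| ∧ δ ≤ |ξ - z| ∧ δ ≤ |ξ - x|} =
          {ξ | δ ≤ |ξ - x| ∧ δ ≤ |ξ - y| ∧ δ ≤ |ξ - z|} ∧
        {ξ : ℝ | δ ≤ |ξ - y| ∧ δ ≤ |ξ - x| ∧ δ ≤ |ξ - z|} =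
          {ξ | δ ≤ |ξ - x| ∧ δ ≤ |ξ - y| ∧ δ ≤ |ξ - z|} := by
    constructor <;> ext ξ <;> simp only [mem_ofPred_eq] <;> tauto
  have hpole_x := tendsto_setIntegral_sub_setIntegral_add_pole Q.integrable hyx.symm hxz
  have hpole_z := tendsto_setIntegral_sub_setIntegral_add_pole Q.integrable hyz.symm hxz.symm
  simp only [hsets] at hpole_x hpole_z
  have hlim := ((hpole_x.sub hpole_z).add (hI.const_mul (x - z))).const_mul (1 / π ^ 2)
  rw [show (x - z) * (1 / π ^ 2 * I) = 1 / π ^ 2 * (0 - 0 + (x - z) * I) by ring]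
  refine tendsto_nhds_unique ((hRQker y z hyz).sub (hRQker y x hyx)) (hlim.congr' ?_)
  filter_upwards [self_mem_nhdsWithin] with δ hδ
  rw [← setIntegral_sub_setIntegral_eq_mul_setIntegral Q.integrable hδ]
  ring

/-- For `x < z < y` with `2|x-z| < |z-y|` and Schwartz `Q`, the kernel
difference identity
`𝓡_Q(y,z) - 𝓡_Q(y,x) = (x-z) (1/π²) PV ∫ Q(ξ)/((ξ-y)(x-ξ)(z-ξ)) dξ`
holds, where `𝓡_Q(a,b) = (1/π²) PV ∫ Q(ξ)/((a-ξ)(ξ-b)) dξ` and the three-pole principal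
value `I` is taken in the symmetric sense at the poles `x, y, z`. -/
theorem stmt16
    (Q : SchwartzMap ℝ ℝ)
    (RQker : ℝ → ℝ → ℝ)
    (hRQker : ∀ a b : ℝ, a ≠ b → Tendsto
      (fun δ : ℝ => (1 / π ^ 2) *
        ∫ ξ in {ξ : ℝ | δ ≤ |ξ - a| ∧ δ ≤ |ξ - b|}, Q ξ / ((a - ξ) * (ξ - b)))
      (nhdsWithin 0 (Set.Ioi 0)) (nhds (RQker a b)))
    (x z y : ℝ) (h1 : x < z) (h2 : z < y) (h3 : 2 * |x - z| < |z - y|)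
    (I : ℝ)
    (hI : Tendsto
      (fun δ : ℝ =>
        ∫ ξ in {ξ : ℝ | δ ≤ |ξ - x| ∧ δ ≤ |ξ - y| ∧ δ ≤ |ξ - z|},
          Q ξ / ((ξ - y) * (x - ξ) * (z - ξ)))
      (nhdsWithin 0 (Set.Ioi 0)) (nhds I)) :
    RQker y z - RQker y x = (x - z) * ((1 / π ^ 2) * I) :=
  stmt16_general Q RQker hRQker x z y h1 h2 I hI
end
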